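/- Let M be a matroid with finite ground set E, let h ≥ 2 be an integer, and let X ⊆ E be a set with rank(X) = h. Let Z ⊆ cl(X) be an h-uniform set that is inclusion-maximal among h-uniform subsets of cl(X) (i.e., there is no x ∈ cl(X) \ Z such that Z ∪ {x} is h-uniform). Then cl(X) equals the union of cl(S) taken over all subsets S ⊆ Z with |S| = h−1. -/

import Mathlib

open Set

/-- The rank of a set `X` in a matroid `M`: the maximum cardinality of an
independent subset of `X`. -/
noncomputable def mrank {α : Type*} (M : Matroid α) (X : Set α) : ℕ :=
  sSup {n : ℕ | ∃ I, M.Indep I ∧ I ⊆ X ∧ I.ncard = n}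

/-- `B` is a `k`-fault-tolerant spanning set of `M`: `B ⊆ M.E` and removing any
at most `k` elements from `B` leaves a set of full rank. -/
def FTSpanning {α : Type*} (M : Matroid α) (k : ℕ) (B : Set α) : Prop :=
  B ⊆ M.E ∧ ∀ F ⊆ B, F.ncard ≤ k → mrank M (B \ F) = mrank M M.E

/-- `B` is a `k`-fault-tolerant basis of `M`: a `k`-fault-tolerant spanning set of
minimum cardinality among all `k`-fault-tolerant spanning sets. -/
def FTBasis {α : Type*} (M : Matroid α) (k : ℕ) (B : Set α) : Prop :=
  FTSpanning M k B ∧ ∀ B', FTSpanning M k B' → B.ncard ≤ B'.ncard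

/-- `X` is `h`-uniform in `M`: `rank(X) = h` and every subset of `X` of size `h`
has rank `h`. -/
def HUniform {α : Type*} (M : Matroid α) (h : ℕ) (X : Set α) : Prop :=
  mrank M X = h ∧ ∀ Y ⊆ X, Y.ncard = h → mrank M Y = h

/-!
Let `x ∈ cl(X)`. If `x ∈ Z`, any `(h-1)`-subset of `Z` through `x` works. Otherwise
`Z ∪ {x}` still has rank `h`, so by maximality some `h`-subset `Y` of it has rank `< h`.
Such a `Y` must contain `x`, and `S = Y \ {x}` is an `(h-1)`-subset of `Z`, hence
independent; as `S ∪ {x} = Y` is dependent, `x ∈ cl(S)`.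
-/

lemma Matroid.exists_mem_closure_of_mem {α : Type*} {M : Matroid α} {Z : Set α} {x : α} {n : ℕ}
    (hZE : Z ⊆ M.E) (hx : x ∈ Z) (hn : 1 ≤ n) (hnZ : n ≤ Z.ncard) :
    ∃ S ⊆ Z, S.ncard = n ∧ x ∈ M.closure S := by
  obtain ⟨S, hxS, hSZ, hS⟩ :=
    exists_subsuperset_card_eq (singleton_subset_iff.2 hx) (by rwa [ncard_singleton]) hnZ
  exact ⟨S, hSZ, hS, M.mem_closure_of_mem' (singleton_subset_iff.1 hxS) (hZE hx)⟩

section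

open Matroid

variable {α : Type*} {M : Matroid α} {X Y Z I : Set α} {x : α} {h : ℕ}

lemma cast_mrank (M : Matroid α) [M.RankFinite] (X : Set α) : (mrank M X : ℕ∞) = M.eRk X := by
  obtain ⟨I, hI⟩ := M.exists_isBasis' X
  have hmax : IsGreatest {n | ∃ J, M.Indep J ∧ J ⊆ X ∧ J.ncard = n} I.ncard := by
    refine ⟨⟨I, hI.indep, hI.subset, rfl⟩, ?_⟩
    rintro _ ⟨J, hJ, hJX, rfl⟩
    have hle := hJ.encard_le_eRk_of_subset hJX
    rw [← hI.encard_eq_eRk, ← hJ.finite.cast_ncard_eq, ← hI.indep.finite.cast_ncard_eq] at hle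
    exact_mod_cast hle
  rw [mrank, hmax.csSup_eq, hI.indep.finite.cast_ncard_eq, hI.encard_eq_eRk]

variable [M.RankFinite]

lemma mrank_closure (X : Set α) : mrank M (M.closure X) = mrank M X := by
  rw [← Nat.cast_inj (R := ℕ∞), cast_mrank, cast_mrank, eRk_closure_eq]

lemma mrank_mono (hXY : X ⊆ Y) : mrank M X ≤ mrank M Y := by
  rw [← Nat.cast_le (α := ℕ∞), cast_mrank, cast_mrank]
  exact M.eRk_mono hXY

lemma mrank_le_ncard (hX : X.Finite) : mrank M X ≤ X.ncard := by
  rw [← Nat.cast_le (α := ℕ∞), cast_mrank, hX.cast_ncard_eq]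
  exact M.eRk_le_encard X

lemma indep_iff_mrank_eq_ncard (hI : I.Finite) : M.Indep I ↔ mrank M I = I.ncard := by
  rw [indep_iff_eRk_eq_encard, ← cast_mrank, ← hI.cast_ncard_eq, Nat.cast_inj]

lemma HUniform.le_ncard (hZ : HUniform M h Z) (hZfin : Z.Finite) : h ≤ Z.ncard :=
  hZ.1 ▸ mrank_le_ncard hZfin

lemma HUniform.indep_of_subset (hZ : HUniform M h Z) (hZfin : Z.Finite) (hYZ : Y ⊆ Z)
    (hY : Y.ncard ≤ h) : M.Indep Y := by
  obtain ⟨W, hYW, hWZ, hW⟩ := exists_subsuperset_card_eq hYZ hY (hZ.le_ncard hZfin)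
  refine ((indep_iff_mrank_eq_ncard (hZfin.subset hWZ)).2 ?_).subset hYW
  rw [hW, hZ.2 W hWZ hW]

lemma HUniform.exists_mem_closure_of_not_hUniform_insert (hZ : HUniform M h Z)
    (hZfin : Z.Finite) (hx : x ∈ M.E) (hrank : mrank M (insert x Z) = h)
    (hnot : ¬ HUniform M h (insert x Z)) : ∃ S ⊆ Z, S.ncard = h - 1 ∧ x ∈ M.closure S := by
  obtain ⟨Y, hYxZ, hYcard, hYrank⟩ : ∃ Y ⊆ insert x Z, Y.ncard = h ∧ mrank M Y ≠ h := by
    simpa [HUniform, hrank] using hnot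
  have hxY : x ∈ Y := by
    by_contra hxY
    exact hYrank (hZ.2 Y ((subset_insert_iff_of_notMem hxY).1 hYxZ) hYcard)
  have hYfin : Y.Finite := (hZfin.insert x).subset hYxZ
  have hSZ : Y \ {x} ⊆ Z := sdiff_singleton_subset_iff.2 hYxZ
  have hScard : (Y \ {x}).ncard = h - 1 := by rw [ncard_sdiff_singleton_of_mem hxY, hYcard]
  have hSind : M.Indep (Y \ {x}) := hZ.indep_of_subset hZfin hSZ (by omega)
  refine ⟨Y \ {x}, hSZ, hScard, ?_⟩
  by_contra hxS
  have hYind : M.Indep Y := by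
    rw [← insert_eq_of_mem hxY, ← insert_sdiff_singleton]
    exact (hSind.insert_indep_iff_of_notMem (by simp)).2 ⟨hx, hxS⟩
  exact hYrank (by rw [(indep_iff_mrank_eq_ncard hYfin).1 hYind, hYcard])

end

theorem statement9_general {α : Type*} (M : Matroid α) (hE : M.E.Finite)
    (h : ℕ) (hh : 2 ≤ h)
    (X : Set α) (hXrank : mrank M X = h)
    (Z : Set α) (hZcl : Z ⊆ M.closure X) (hZ : HUniform M h Z)
    (hZmax : ∀ x ∈ M.closure X \ Z, ¬ HUniform M h (Z ∪ {x})) :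
    M.closure X = ⋃ S ∈ {S : Set α | S ⊆ Z ∧ S.ncard = h - 1}, M.closure S := by
  have : M.Finite := ⟨hE⟩
  have hZE : Z ⊆ M.E := hZcl.trans (M.closure_subset_ground X)
  have hZfin : Z.Finite := hE.subset hZE
  refine Subset.antisymm (fun x hx ↦ ?_)
    (iUnion₂_subset fun S hS ↦ M.closure_subset_closure_of_subset_closure (hS.1.trans hZcl))
  suffices ∃ S ⊆ Z, S.ncard = h - 1 ∧ x ∈ M.closure S by
    obtain ⟨S, hSZ, hS, hxS⟩ := this
    exact mem_iUnion₂.2 ⟨S, ⟨hSZ, hS⟩, hxS⟩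
  by_cases hxZ : x ∈ Z
  · have := hZ.le_ncard hZfin
    exact M.exists_mem_closure_of_mem hZE hxZ (by omega) (by omega)
  have hrank : mrank M (insert x Z) = h := by
    refine le_antisymm ?_ (hZ.1 ▸ mrank_mono (subset_insert x Z))
    calc mrank M (insert x Z) ≤ mrank M (M.closure X) := mrank_mono (insert_subset hx hZcl)
      _ = h := by rw [mrank_closure, hXrank]
  exact hZ.exists_mem_closure_of_not_hUniform_insert hZfin (M.closure_subset_ground X hx) hrank
    (by simpa [union_singleton] using hZmax x ⟨hx, hxZ⟩)

/-- Let `M` have finite ground set, `h ≥ 2`, and `X ⊆ M.E` with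
`rank(X) = h`. Let `Z ⊆ cl(X)` be an `h`-uniform set that is inclusion-maximal among
`h`-uniform subsets of `cl(X)`. Then `cl(X)` equals the union of `cl(S)` over all
subsets `S ⊆ Z` with `|S| = h − 1`. -/
theorem statement9 {α : Type*} (M : Matroid α) (hE : M.E.Finite)
    (h : ℕ) (hh : 2 ≤ h)
    (X : Set α) (hXE : X ⊆ M.E) (hXrank : mrank M X = h)
    (Z : Set α) (hZcl : Z ⊆ M.closure X) (hZ : HUniform M h Z)
    (hZmax : ∀ x ∈ M.closure X \ Z, ¬ HUniform M h (Z ∪ {x})) :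
    M.closure X = ⋃ S ∈ {S : Set α | S ⊆ Z ∧ S.ncard = h - 1}, M.closure S :=
  statement9_general M hE h hh X hXrank Z hZcl hZ hZmax
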